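/- arXiv:2110.11687 — 2 statements merged into one kernel-verified Lean document; each statement's English description precedes it below -/
import Mathlib

section
/- The inverse function m is differentiable on the open interval (g(Δ₁), g(Δ₂)), and for every t in this interval its derivative is m′(t) = y^{1−c} / ( (c·tan(log y) + θ·sec²(log y)) · (tan(log y))^{θ−1} ), where y = m(t) and sec = 1/cos. -/
open Real

/-- `Δ₁ = exp(π·⌊(log x)/π⌋ + arctan 1)` -/
noncomputable def Δ₁ (x : ℝ) : ℝ :=
  Real.exp (Real.pi * (⌊Real.log x / Real.pi⌋ : ℝ) + Real.arctan 1)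

/-- `Δ₂ = exp(π·⌊(log x)/π⌋ + arctan 2)` -/
noncomputable def Δ₂ (x : ℝ) : ℝ :=
  Real.exp (Real.pi * (⌊Real.log x / Real.pi⌋ : ℝ) + Real.arctan 2)

/-- `g(y) = y^c · (tan(log y))^θ` (real powers). -/
noncomputable def g (c θ y : ℝ) : ℝ := y ^ c * Real.tan (Real.log y) ^ θ

/-!
`g` has the positive derivative
`g' y = (c tan(log y) + θ sec²(log y)) tan(log y)^(θ-1) y^(c-1)` on `[Δ₁, Δ₂]`, since there
`log y` lies in `[kπ + π/4, kπ + arctan 2]` and so `tan (log y) > 0`. Hence `g` is strictly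
increasing, which makes the right inverse `m` continuous, and the inverse function theorem gives
`m' t = 1 / g' (m t)`.
-/

open Set Filter

section RightInverse

variable {α β : Type*} [LinearOrder α] [LinearOrder β] {f : α → β} {m : β → α} {a b : α}

theorem StrictMonoOn.strictMonoOn_of_rightInvOn (hf : StrictMonoOn f (Icc a b))
    (hmaps : MapsTo m (Icc (f a) (f b)) (Icc a b)) (hinv : RightInvOn m f (Icc (f a) (f b))) :
    StrictMonoOn m (Icc (f a) (f b)) := by
  intro s hs s' hs' hlt
  by_contra! hle
  have := hf.monotoneOn (hmaps hs') (hmaps hs) hle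
  rw [hinv hs, hinv hs'] at this
  exact this.not_gt hlt

variable [TopologicalSpace α] [OrderTopology α] [DenselyOrdered α]
  [TopologicalSpace β] [OrderTopology β]

theorem StrictMonoOn.continuousAt_of_rightInvOn (hf : StrictMonoOn f (Icc a b))
    (hmaps : MapsTo m (Icc (f a) (f b)) (Icc a b)) (hinv : RightInvOn m f (Icc (f a) (f b)))
    {t : β} (ht : t ∈ Ioo (f a) (f b)) : ContinuousAt m t := by
  have hmt : m t ∈ Icc a b := hmaps (Ioo_subset_Icc_self ht)
  have hft : f (m t) = t := hinv (Ioo_subset_Icc_self ht)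
  have ha : a < m t := hmt.1.lt_of_ne fun h => by rw [← h] at hft; exact ht.1.ne hft
  have hb : m t < b := hmt.2.lt_of_ne fun h => by rw [h] at hft; exact ht.2.ne' hft
  have hsurj : Icc a b ⊆ m '' Icc (f a) (f b) := fun y hy =>
    have hfy : f y ∈ Icc (f a) (f b) :=
      ⟨hf.monotoneOn (left_mem_Icc.2 (ha.trans hb).le) hy hy.1,
        hf.monotoneOn hy (right_mem_Icc.2 (ha.trans hb).le) hy.2⟩
    ⟨f y, hfy, hf.injOn (hmaps hfy) hy (hinv hfy)⟩
  exact (hf.strictMonoOn_of_rightInvOn hmaps hinv).continuousAt_of_image_mem_nhds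
    (Icc_mem_nhds ht.1 ht.2) (mem_of_superset (Icc_mem_nhds ha hb) hsurj)

end RightInverse

theorem StrictMonoOn.hasDerivAt_of_rightInvOn {f m : ℝ → ℝ} {a b f' t : ℝ}
    (hf : StrictMonoOn f (Icc a b)) (hmaps : MapsTo m (Icc (f a) (f b)) (Icc a b))
    (hinv : RightInvOn m f (Icc (f a) (f b))) (ht : t ∈ Ioo (f a) (f b))
    (hf' : HasDerivAt f f' (m t)) (hf'₀ : f' ≠ 0) : HasDerivAt m f'⁻¹ t :=
  hf'.of_local_left_inverse (hf.continuousAt_of_rightInvOn hmaps hinv ht) hf'₀ <|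
    mem_of_superset (Ioo_mem_nhds ht.1 ht.2) fun _ hs => hinv (Ioo_subset_Icc_self hs)

theorem Real.tan_pos_of_int_mul_pi_lt {z : ℝ} (k : ℤ) (h₀ : k * π < z) (h₁ : z < k * π + π / 2) :
    0 < tan z := by
  rw [← tan_sub_int_mul_pi z k]
  exact tan_pos_of_pos_of_lt_pi_div_two (by linarith) (by linarith)

theorem pos_of_mem_Icc_Δ {x y : ℝ} (hy : y ∈ Icc (Δ₁ x) (Δ₂ x)) : 0 < y :=
  (exp_pos _).trans_le hy.1

theorem tan_log_pos_of_mem_Icc {x y : ℝ} (hy : y ∈ Icc (Δ₁ x) (Δ₂ x)) : 0 < tan (log y) := by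
  have h₁ : log (Δ₁ x) ≤ log y := log_le_log (exp_pos _) hy.1
  have h₂ : log y ≤ log (Δ₂ x) := log_le_log (pos_of_mem_Icc_Δ hy) hy.2
  rw [Δ₁, log_exp, arctan_one] at h₁
  rw [Δ₂, log_exp] at h₂
  refine tan_pos_of_int_mul_pi_lt ⌊log x / π⌋ (by linarith [pi_pos]) ?_
  linarith [arctan_lt_pi_div_two 2]

noncomputable def g' (c θ y : ℝ) : ℝ :=
  (c * tan (log y) + θ * (1 / cos (log y)) ^ 2) * tan (log y) ^ (θ - 1) * y ^ (c - 1)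

theorem hasDerivAt_g (c θ : ℝ) {y : ℝ} (hy : 0 < y) (ht : 0 < tan (log y)) :
    HasDerivAt (g c θ) (g' c θ y) y := by
  have hcos : cos (log y) ≠ 0 := fun h => by simp [tan_eq_sin_div_cos, h] at ht
  have htan : HasDerivAt (fun z => tan (log z)) (1 / cos (log y) ^ 2 * y⁻¹) y :=
    (hasDerivAt_tan hcos).comp y (hasDerivAt_log hy.ne')
  refine ((hasDerivAt_rpow_const (p := c) (Or.inl hy.ne')).mul
    (htan.rpow_const (p := θ) (Or.inl ht.ne'))).congr_deriv ?_
  have hT : tan (log y) ^ θ = tan (log y) ^ (θ - 1) * tan (log y) := by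
    rw [← rpow_add_one ht.ne', sub_add_cancel]
  have hY : y ^ c = y ^ (c - 1) * y := by
    rw [← rpow_add_one hy.ne', sub_add_cancel]
  rw [g', hT, hY]
  field_simp

theorem g'_pos {c θ y : ℝ} (hc : 0 < c) (hθ : 0 ≤ θ) (hy : 0 < y) (ht : 0 < tan (log y)) :
    0 < g' c θ y := by
  unfold g'
  have := rpow_pos_of_pos ht (θ - 1)
  have := rpow_pos_of_pos hy (c - 1)
  positivity

theorem inv_g'_eq (c θ : ℝ) {y : ℝ} (hy : 0 < y) :
    (g' c θ y)⁻¹ = y ^ (1 - c) /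
      ((c * tan (log y) + θ * (1 / cos (log y)) ^ 2) * tan (log y) ^ (θ - 1)) := by
  rw [g', mul_inv, ← rpow_neg hy.le, neg_sub, mul_comm, ← div_eq_mul_inv]

theorem strictMonoOn_g {c θ : ℝ} (hc : 0 < c) (hθ : 0 ≤ θ) (x : ℝ) :
    StrictMonoOn (g c θ) (Icc (Δ₁ x) (Δ₂ x)) := by
  have hderiv : ∀ y ∈ Icc (Δ₁ x) (Δ₂ x), HasDerivAt (g c θ) (g' c θ y) y := fun y hy =>
    hasDerivAt_g c θ (pos_of_mem_Icc_Δ hy) (tan_log_pos_of_mem_Icc hy)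
  refine strictMonoOn_of_deriv_pos (convex_Icc _ _)
    (fun y hy => (hderiv y hy).continuousAt.continuousWithinAt) fun y hy => ?_
  rw [interior_Icc] at hy
  have hy' := Ioo_subset_Icc_self hy
  rw [(hderiv y hy').deriv]
  exact g'_pos hc hθ (pos_of_mem_Icc_Δ hy') (tan_log_pos_of_mem_Icc hy')

theorem stmt_3_general (c θ : ℝ) (hc₁ : 1 < c) (hθ : 1 < θ)
    (x : ℝ) (m : ℝ → ℝ)
    (hm : ∀ t ∈ Set.Icc (g c θ (Δ₁ x)) (g c θ (Δ₂ x)),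
      m t ∈ Set.Icc (Δ₁ x) (Δ₂ x) ∧ g c θ (m t) = t) :
    ∀ t ∈ Set.Ioo (g c θ (Δ₁ x)) (g c θ (Δ₂ x)),
      DifferentiableAt ℝ m t ∧
        deriv m t = (m t) ^ (1 - c) /
          ((c * Real.tan (Real.log (m t)) + θ * (1 / Real.cos (Real.log (m t))) ^ 2) *
            Real.tan (Real.log (m t)) ^ (θ - 1)) := by
  intro t ht
  have hc : 0 < c := by linarith
  have hθ₀ : 0 ≤ θ := by linarith
  have hmt : m t ∈ Icc (Δ₁ x) (Δ₂ x) := (hm t (Ioo_subset_Icc_self ht)).1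
  have hy := pos_of_mem_Icc_Δ hmt
  have htan := tan_log_pos_of_mem_Icc hmt
  have hd : HasDerivAt m (g' c θ (m t))⁻¹ t :=
    (strictMonoOn_g hc hθ₀ x).hasDerivAt_of_rightInvOn (fun s hs => (hm s hs).1)
      (fun s hs => (hm s hs).2) ht (hasDerivAt_g c θ hy htan) (g'_pos hc hθ₀ hy htan).ne'
  exact ⟨hd.differentiableAt, by rw [hd.deriv, inv_g'_eq c θ hy]⟩

theorem stmt_3 (c θ : ℝ) (hc₁ : 1 < c) (hc₂ : c < 12 / 11) (hθ : 1 < θ)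
    (x : ℝ) (hx : 2 ≤ x) (m : ℝ → ℝ)
    (hm : ∀ t ∈ Set.Icc (g c θ (Δ₁ x)) (g c θ (Δ₂ x)),
      m t ∈ Set.Icc (Δ₁ x) (Δ₂ x) ∧ g c θ (m t) = t) :
    ∀ t ∈ Set.Ioo (g c θ (Δ₁ x)) (g c θ (Δ₂ x)),
      DifferentiableAt ℝ m t ∧
        deriv m t = (m t) ^ (1 - c) /
          ((c * Real.tan (Real.log (m t)) + θ * (1 / Real.cos (Real.log (m t))) ^ 2) *
            Real.tan (Real.log (m t)) ^ (θ - 1)) :=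
  stmt_3_general c θ hc₁ hθ x m hm
end

section
/- Let X > 0, let I be a subinterval of (X, 2X], let Q be a positive integer, and let z : ℤ → ℂ. Then |Σ_{n ∈ I} z(n)|² ≤ (1 + X/Q) · Σ_{|q| < Q} (1 − |q|/Q) · Σ_{n : n ∈ I and n+q ∈ I} z(n+q)·conj(z(n)), where n and q run over integers in the indicated ranges (in particular the right-hand side is a nonnegative real number). -/
open Real
open scoped ComplexOrder

/-!
Extend `z` by zero outside the integer points of `I`; these lie in `[a, b] = [⌊X⌋ + 1, ⌊2X⌋]`.
Summing the window sums `w m = ∑_{j < Q} f (m + j)` over the `b - a + Q ≤ X + Q` integers `m`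
whose window meets `[a, b]` counts every `f n` exactly `Q` times, so Cauchy–Schwarz gives
`Q² |∑ f|² ≤ (X + Q) ∑_m |w m|²`. Expanding `|w m|²` and summing over `m` produces each
correlation `∑_n f (n + q) conj (f n)` once for every pair `j, k < Q` with `j - k = q`,
that is `Q - |q|` times.
-/

open Finset Function ComplexConjugate

lemma card_filter_range_product_sub_eq {Q : ℕ} {q : ℤ} (hq : q.natAbs < Q) :
    #{p ∈ range Q ×ˢ range Q | (p.1 : ℤ) - p.2 = q} = Q - q.natAbs := by
  rw [← card_range (Q - q.natAbs)]
  refine card_bij' (fun p _ => min p.1 p.2) (fun k _ => (k + q.toNat, k + (-q).toNat))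
    ?_ ?_ ?_ ?_
  · intro p hp
    simp only [mem_filter, mem_product, mem_range] at hp ⊢
    omega
  · intro k hk
    simp only [mem_filter, mem_product, mem_range] at hk ⊢
    omega
  · intro p hp
    simp only [mem_filter, mem_product, mem_range] at hp
    ext <;> simp only <;> omega
  · intro k _
    simp only
    omega

lemma sum_range_product_comp_sub {M : Type*} [AddCommMonoid M] (Q : ℕ) (F : ℤ → M) :
    ∑ p ∈ range Q ×ˢ range Q, F (p.1 - p.2) =
      ∑ q ∈ Ioo (-(Q : ℤ)) Q, (Q - q.natAbs) • F q := by
  have hlag : ∀ p ∈ range Q ×ˢ range Q, (p.1 : ℤ) - p.2 ∈ Ioo (-(Q : ℤ)) Q := by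
    intro p hp
    simp only [mem_product, mem_range, mem_Ioo] at hp ⊢
    omega
  rw [← sum_fiberwise_of_maps_to hlag]
  refine sum_congr rfl fun q hq => ?_
  rw [sum_congr rfl fun p hp => congrArg F (mem_filter.mp hp).2, sum_const,
    card_filter_range_product_sub_eq (by rw [mem_Ioo] at hq; omega)]

lemma sum_Icc_comp_add_of_support_subset {M : Type*} [AddCommMonoid M] {f : ℤ → M} {a b : ℤ}
    (hf : support f ⊆ Icc a b) {c d j : ℤ} (hc : c + j ≤ a) (hd : b ≤ d + j) :
    ∑ m ∈ Icc c d, f (m + j) = ∑ n ∈ Icc a b, f n := by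
  have hshift : ∑ n ∈ Icc (c + j) (d + j), f n = ∑ m ∈ Icc c d, f (m + j) := by
    rw [← map_add_right_Icc, sum_map]
    rfl
  rw [← hshift]
  refine (sum_subset (fun n hn => ?_) fun n _ hn => notMem_support.mp fun h => hn (hf h)).symm
  simp only [mem_Icc] at hn ⊢
  omega

def windowSum {M : Type*} [AddCommMonoid M] (f : ℤ → M) (Q : ℕ) (m : ℤ) : M :=
  ∑ j ∈ range Q, f (m + j)

lemma sum_windowSum {M : Type*} [AddCommMonoid M] {f : ℤ → M} {a b : ℤ}
    (hf : support f ⊆ Icc a b) (Q : ℕ) :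
    ∑ m ∈ Icc (a - Q + 1) b, windowSum f Q m = Q • ∑ n ∈ Icc a b, f n := by
  simp_rw [windowSum]
  rw [sum_comm, sum_congr rfl fun j hj => sum_Icc_comp_add_of_support_subset hf
    (by rw [mem_range] at hj; omega) (by omega), sum_const, card_range]

section RCLike

variable {𝕜 : Type*} [RCLike 𝕜] {f : ℤ → 𝕜} {s : Set ℤ} {a b : ℤ}

lemma support_mul_conj_comp_add_subset (hf : support f ⊆ s) (q : ℤ) :
    support (fun n => f (n + q) * conj (f n)) ⊆ s :=
  (support_mul_subset_right _ _).trans fun n hn => hf fun h => hn (by simp [h])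

lemma finsum_mem_mul_conj_eq_finsum_indicator (z : ℤ → 𝕜) (s : Set ℤ) (q : ℤ) :
    ∑ᶠ n ∈ {n | n ∈ s ∧ n + q ∈ s}, z (n + q) * conj (z n) =
      ∑ᶠ n, s.indicator z (n + q) * conj (s.indicator z n) := by
  classical
  rw [finsum_mem_def]
  congr 1
  ext n
  simp only [Set.indicator_apply, Set.mem_ofPred_eq]
  split_ifs <;> simp_all

lemma sum_windowSum_mul_conj (hf : support f ⊆ Icc a b) (Q : ℕ) :
    ∑ m ∈ Icc (a - Q + 1) b, windowSum f Q m * conj (windowSum f Q m) =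
      ∑ q ∈ Ioo (-(Q : ℤ)) Q, (Q - q.natAbs) • ∑ n ∈ Icc a b, f (n + q) * conj (f n) := by
  have hexpand : ∀ m, windowSum f Q m * conj (windowSum f Q m) =
      ∑ p ∈ range Q ×ˢ range Q, f (m + p.1) * conj (f (m + p.2)) := fun m => by
    rw [windowSum, map_sum, sum_mul_sum, sum_product]
  have hshift : ∀ p ∈ range Q ×ˢ range Q,
      ∑ m ∈ Icc (a - Q + 1) b, f (m + p.1) * conj (f (m + p.2)) =
        ∑ n ∈ Icc a b, f (n + (p.1 - p.2 : ℤ)) * conj (f n) := by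
    intro p hp
    rw [mem_product, mem_range, mem_range] at hp
    rw [← sum_Icc_comp_add_of_support_subset (support_mul_conj_comp_add_subset hf _)
      (c := a - Q + 1) (d := b) (j := p.2) (by omega) (by omega)]
    simp only [add_add_sub_cancel]
  rw [sum_congr rfl fun m _ => hexpand m, sum_comm, sum_congr rfl hshift,
    sum_range_product_comp_sub Q (fun q => ∑ n ∈ Icc a b, f (n + q) * conj (f n))]

lemma sq_mul_norm_sum_le_card_mul_sum_sq_norm_windowSum (hf : support f ⊆ Icc a b) (Q : ℕ) :
    (Q * ‖∑ n ∈ Icc a b, f n‖) ^ 2 ≤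
      #(Icc (a - Q + 1) b) * ∑ m ∈ Icc (a - Q + 1) b, ‖windowSum f Q m‖ ^ 2 :=
  calc (Q * ‖∑ n ∈ Icc a b, f n‖) ^ 2
      = ‖∑ m ∈ Icc (a - Q + 1) b, windowSum f Q m‖ ^ 2 := by
        rw [sum_windowSum hf, nsmul_eq_mul, norm_mul, RCLike.norm_natCast]
    _ ≤ (∑ m ∈ Icc (a - Q + 1) b, ‖windowSum f Q m‖) ^ 2 := by gcongr; exact norm_sum_le _ _
    _ ≤ _ := sq_sum_le_card_mul_sum_sq

lemma sum_one_sub_div_mul_autocorrelation_eq (hf : support f ⊆ Icc a b) {Q : ℕ} (hQ : 0 < Q) :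
    ∑ q ∈ Ioo (-(Q : ℤ)) Q,
        ((1 - |(q : ℝ)| / Q : ℝ) : 𝕜) * ∑ n ∈ Icc a b, f (n + q) * conj (f n) =
      ((∑ m ∈ Icc (a - Q + 1) b, ‖windowSum f Q m‖ ^ 2) / Q : ℝ) := by
  have hweight : ∀ q ∈ Ioo (-(Q : ℤ)) Q, ((1 - |(q : ℝ)| / Q : ℝ) : 𝕜) =
      (Q : 𝕜)⁻¹ * (Q - q.natAbs : ℕ) := by
    intro q hq
    rw [mem_Ioo] at hq
    have hreal : 1 - |(q : ℝ)| / Q = (Q - q.natAbs : ℕ) / Q := by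
      rw [Nat.cast_sub (by omega), Nat.cast_natAbs, Int.cast_abs]
      field_simp
    rw [hreal]
    push_cast
    ring
  calc _ = (Q : 𝕜)⁻¹ * ∑ q ∈ Ioo (-(Q : ℤ)) Q,
          (Q - q.natAbs) • ∑ n ∈ Icc a b, f (n + q) * conj (f n) := by
        rw [mul_sum]
        refine sum_congr rfl fun q hq => ?_
        rw [hweight q hq, nsmul_eq_mul, mul_assoc]
    _ = (Q : 𝕜)⁻¹ * ∑ m ∈ Icc (a - Q + 1) b, windowSum f Q m * conj (windowSum f Q m) := by
        rw [sum_windowSum_mul_conj hf]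
    _ = _ := by
        simp_rw [RCLike.mul_conj]
        push_cast
        ring

end RCLike

theorem van_der_corput_sq_norm_sum_le {f : ℤ → ℂ} {a b : ℤ} (hf : support f ⊆ Icc a b)
    {Q : ℕ} (hQ : 0 < Q) {L : ℝ} (hL : (#(Icc (a - Q + 1) b) : ℝ) ≤ L) :
    ((‖∑ n ∈ Icc a b, f n‖ ^ 2 : ℝ) : ℂ) ≤
      ((L / Q : ℝ) : ℂ) * ∑ q ∈ Ioo (-(Q : ℤ)) Q,
        ((1 - |(q : ℝ)| / Q : ℝ) : ℂ) * ∑ n ∈ Icc a b, f (n + q) * conj (f n) := by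
  have hweighted := sum_one_sub_div_mul_autocorrelation_eq (𝕜 := ℂ) hf hQ
  simp only [RCLike.ofReal_eq_complex_ofReal] at hweighted
  rw [hweighted, ← Complex.ofReal_mul, Complex.real_le_real]
  set R := ∑ m ∈ Icc (a - Q + 1) b, ‖windowSum f Q m‖ ^ 2
  have hR : 0 ≤ R := sum_nonneg fun m _ => sq_nonneg _
  have hQ' : (0 : ℝ) < Q := Nat.cast_pos.mpr hQ
  calc ‖∑ n ∈ Icc a b, f n‖ ^ 2 = (Q * ‖∑ n ∈ Icc a b, f n‖) ^ 2 / Q ^ 2 := by field_simp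
    _ ≤ #(Icc (a - Q + 1) b) * R / Q ^ 2 := by
        gcongr
        exact sq_mul_norm_sum_le_card_mul_sum_sq_norm_windowSum hf Q
    _ ≤ L * R / Q ^ 2 := by gcongr
    _ = L / Q * (R / Q) := by field_simp

theorem stmt_17_general (X : ℝ) (hX : 0 < X) (I : Set ℝ) (hI : I ⊆ Set.Ioc X (2 * X))
    (Q : ℕ) (hQ : 0 < Q) (z : ℤ → ℂ) :
    ((‖∑ᶠ n ∈ {n : ℤ | (n : ℝ) ∈ I}, z n‖ ^ 2 : ℝ) : ℂ) ≤
      ((1 + X / (Q : ℝ) : ℝ) : ℂ) *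
        ∑ᶠ q ∈ {q : ℤ | |q| < (Q : ℤ)},
          ((1 - (|q| : ℝ) / (Q : ℝ) : ℝ) : ℂ) *
            ∑ᶠ n ∈ {n : ℤ | (n : ℝ) ∈ I ∧ ((n + q : ℤ) : ℝ) ∈ I},
              z (n + q) * (starRingEnd ℂ) (z n) := by
  set f := {n : ℤ | (n : ℝ) ∈ I}.indicator z
  have hf : support f ⊆ Icc (⌊X⌋ + 1) ⌊2 * X⌋ := fun n hn => by
    obtain ⟨hXn, hn2X⟩ := hI (Set.mem_of_indicator_ne_zero (f := z) hn)
    exact mem_Icc.mpr ⟨Int.floor_lt.mpr hXn, Int.le_floor.mpr hn2X⟩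
  have hcorr : ∀ q : ℤ, ∑ᶠ n ∈ {n : ℤ | (n : ℝ) ∈ I ∧ ((n + q : ℤ) : ℝ) ∈ I},
      z (n + q) * conj (z n) = ∑ n ∈ Icc (⌊X⌋ + 1) ⌊2 * X⌋, f (n + q) * conj (f n) :=
    fun q => (finsum_mem_mul_conj_eq_finsum_indicator z _ q).trans
      (finsum_eq_finsetSum_of_support_subset _ (support_mul_conj_comp_add_subset hf q))
  have hlags : {q : ℤ | |q| < (Q : ℤ)} = ↑(Ioo (-(Q : ℤ)) Q) := by
    ext q
    simp [abs_lt]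
  have hcard : (#(Icc (⌊X⌋ + 1 - Q + 1) ⌊2 * X⌋) : ℝ) ≤ X + Q := by
    rw [Int.card_Icc, ← Int.cast_natCast, Int.toNat_eq_max]
    push_cast
    have := Int.floor_le (2 * X)
    have := Int.lt_floor_add_one X
    exact max_le (by linarith) (by positivity)
  rw [finsum_mem_def, finsum_eq_finsetSum_of_support_subset _ hf, hlags, finsum_mem_coe_finset]
  simp_rw [hcorr]
  rw [show 1 + X / Q = (X + Q) / Q by field_simp; ring]
  exact van_der_corput_sq_norm_sum_le hf hQ hcard

theorem stmt_17 (X : ℝ) (hX : 0 < X) (I : Set ℝ) (hI : I ⊆ Set.Ioc X (2 * X))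
    (hI' : I.OrdConnected) (Q : ℕ) (hQ : 0 < Q) (z : ℤ → ℂ) :
    ((‖∑ᶠ n ∈ {n : ℤ | (n : ℝ) ∈ I}, z n‖ ^ 2 : ℝ) : ℂ) ≤
      ((1 + X / (Q : ℝ) : ℝ) : ℂ) *
        ∑ᶠ q ∈ {q : ℤ | |q| < (Q : ℤ)},
          ((1 - (|q| : ℝ) / (Q : ℝ) : ℝ) : ℂ) *
            ∑ᶠ n ∈ {n : ℤ | (n : ℝ) ∈ I ∧ ((n + q : ℤ) : ℝ) ∈ I},
              z (n + q) * (starRingEnd ℂ) (z n) :=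
  stmt_17_general X hX I hI Q hQ z
end
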